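/- Let U and hatU be n x d real matrices with orthonormal columns (U^T U = hatU^T hatU = I_d), and let U^T hatU = W_1 Sigma W_2^T be a singular value decomposition of U^T hatU with W_1, W_2 orthogonal d x d matrices and Sigma diagonal with entries sigma_1,...,sigma_d in [0,1]. Then ||U^T hatU - W_1 W_2^T||_F <= d ||hatU hatU^T - U U^T||^2, where ||.|| is the spectral norm and ||.||_F the Frobenius norm. -/

import Mathlib

open MeasureTheory ProbabilityTheory Matrix Filter
open scoped ENNReal NNReal Topology

noncomputable section

namespace CMDSPaper

/-- Euclidean norm of a vector in `Fin d → ℝ`. -/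
def enorm2 {d : ℕ} (v : Fin d → ℝ) : ℝ := Real.sqrt (∑ j, v j ^ 2)

/-- A real random variable is sub-Gaussian. -/
def SubGaussianRV {α : Type*} [MeasurableSpace α] (μ : Measure α) (X : α → ℝ) : Prop :=
  ∃ K > 0, ∀ t ≥ 0, μ {a | t < |X a|} ≤ ENNReal.ofReal (2 * Real.exp (-(t ^ 2 / K ^ 2)))

/-- A probability distribution on `ℝ^d` is sub-Gaussian if all its one-dimensional
marginals are sub-Gaussian. -/
def SubGaussianMeasure {d : ℕ} (F : Measure (Fin d → ℝ)) : Prop :=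
  ∀ u : Fin d → ℝ, SubGaussianRV F fun z => ∑ j, z j * u j

/-- The `n × n` double centering matrix `P = I - (1/n) 1 1ᵀ`. -/
def cent (n : ℕ) : Matrix (Fin n) (Fin n) ℝ :=
  1 - (n : ℝ)⁻¹ • Matrix.of fun _ _ => (1 : ℝ)

/-- Entrywise square of a matrix. -/
def entsq {n : ℕ} (A : Matrix (Fin n) (Fin n) ℝ) : Matrix (Fin n) (Fin n) ℝ :=
  Matrix.of fun i j => A i j ^ 2

/-- `-(1/2) P M P` applied to an (already squared) dissimilarity matrix `M`. -/
def bmatSq {n : ℕ} (M : Matrix (Fin n) (Fin n) ℝ) : Matrix (Fin n) (Fin n) ℝ :=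
  (-(1 / 2) : ℝ) • (cent n * M * cent n)

/-- Entrywise square root of a diagonal matrix. -/
def dsqrt {d : ℕ} (S : Matrix (Fin d) (Fin d) ℝ) : Matrix (Fin d) (Fin d) ℝ :=
  Matrix.diagonal fun j => Real.sqrt (S j j)

/-- Entrywise inverse square root of a diagonal matrix. -/
def dinvsqrt {d : ℕ} (S : Matrix (Fin d) (Fin d) ℝ) : Matrix (Fin d) (Fin d) ℝ :=
  Matrix.diagonal fun j => (Real.sqrt (S j j))⁻¹

/-- `U`, `S` form a top-`d` eigendecomposition of the symmetric matrix `B`: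
there is a full orthonormal eigendecomposition with eigenvalues sorted in
decreasing order such that `U` consists of the first `d` eigenvector columns
and `S` is the diagonal matrix of the `d` largest eigenvalues. -/
def IsTopdEigen {n d : ℕ} (B : Matrix (Fin n) (Fin n) ℝ)
    (U : Matrix (Fin n) (Fin d) ℝ) (S : Matrix (Fin d) (Fin d) ℝ) : Prop :=
  ∃ (h : d ≤ n) (Q : Matrix (Fin n) (Fin n) ℝ) (lam : Fin n → ℝ),
    Qᵀ * Q = 1 ∧ B = Q * Matrix.diagonal lam * Qᵀ ∧ Antitone lam ∧
    (∀ i j, U i j = Q i (Fin.castLE h j)) ∧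
    S = Matrix.diagonal fun j => lam (Fin.castLE h j)

/-- The standard Gaussian on `ℝ^d`. -/
def stdGaussian (d : ℕ) : Measure (Fin d → ℝ) :=
  Measure.pi fun _ => gaussianReal 0 1

open scoped Classical in
/-- The mean-zero Gaussian measure on `ℝ^d` with covariance matrix `S`
(junk value if `S` is not positive semidefinite). -/
def mvGaussian {d : ℕ} (S : Matrix (Fin d) (Fin d) ℝ) : Measure (Fin d → ℝ) :=
  if h : S.PosSemidef then (stdGaussian d).map ((h.1.eigenvectorUnitary : Matrix (Fin d) (Fin d) ℝ) *
    Matrix.diagonal (fun i => Real.sqrt (h.1.eigenvalues i)) *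
    (star h.1.eigenvectorUnitary : Matrix (Fin d) (Fin d) ℝ)).mulVec else stdGaussian d

/-- `Φ(α, S)`: the CDF at `α` of the mean-zero Gaussian on `ℝ^d` with covariance `S`. -/
def gaussPhi {d : ℕ} (S : Matrix (Fin d) (Fin d) ℝ) (α : Fin d → ℝ) : ℝ :=
  (mvGaussian S {x | ∀ j, x j ≤ α j}).toReal

/-- Spectral (ℓ₂ operator) norm of a matrix. -/
def specNorm {m n : ℕ} (A : Matrix (Fin m) (Fin n) ℝ) : ℝ :=
  ‖LinearMap.toContinuousLinearMap (Matrix.toEuclideanLin A)‖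

/-- Frobenius norm of a matrix. -/
def frobNorm {m n : ℕ} (A : Matrix (Fin m) (Fin n) ℝ) : ℝ :=
  Real.sqrt (∑ i, ∑ j, A i j ^ 2)

/-- The sub-exponential Orlicz (ψ₁) norm of a real random variable. -/
def psi1Norm {α : Type*} [MeasurableSpace α] (μ : Measure α) (Y : α → ℝ) : ℝ :=
  sInf {t | 0 < t ∧ ∫ a, Real.exp (|Y a| / t) ∂μ ≤ 2}

end CMDSPaper

/-!
Write `Uᵀ hatU - W₁ W₂ᵀ = W₁ (Σ - I) W₂ᵀ`; its Frobenius norm is `‖σ - 1‖₂ ≤ ∑ⱼ (1 - σⱼ)`.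
The columns `xⱼ` of `hatU W₂` are unit vectors with `Uᵀ xⱼ = σⱼ W₁ eⱼ`, and
`(hatU hatUᵀ - U Uᵀ) xⱼ = xⱼ - U Uᵀ xⱼ` has squared length `1 - σⱼ² ≥ 1 - σⱼ`, which is at most
the squared spectral norm.
-/

namespace CMDSPaper

lemma enorm2_mulVec_le {m n : ℕ} (A : Matrix (Fin m) (Fin n) ℝ) (v : Fin n → ℝ) :
    enorm2 (A *ᵥ v) ≤ specNorm A * enorm2 v := by
  have hnorm : ∀ {k : ℕ} (w : Fin k → ℝ), ‖WithLp.toLp 2 w‖ = enorm2 w := fun w => by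
    simp only [EuclideanSpace.norm_eq, Real.norm_eq_abs, sq_abs, enorm2]
  rw [specNorm]
  simpa only [LinearMap.coe_toContinuousLinearMap', Matrix.toLpLin_toLp, Matrix.toLin'_apply,
    hnorm] using
    (LinearMap.toContinuousLinearMap (Matrix.toEuclideanLin A)).le_opNorm (WithLp.toLp 2 v)

lemma transpose_mul_self_apply_self {m n : ℕ} (A : Matrix (Fin m) (Fin n) ℝ) (j : Fin n) :
    (Aᵀ * A) j j = enorm2 (fun i => A i j) ^ 2 := by
  rw [enorm2, Real.sq_sqrt (Finset.sum_nonneg fun i _ => sq_nonneg _), Matrix.mul_apply]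
  simp only [Matrix.transpose_apply, sq]

lemma transpose_mul_self_apply_self_le {m n k : ℕ} (M : Matrix (Fin m) (Fin n) ℝ)
    (X : Matrix (Fin n) (Fin k) ℝ) (j : Fin k) :
    ((M * X)ᵀ * (M * X)) j j ≤ specNorm M ^ 2 * (Xᵀ * X) j j := by
  have hcol : (fun i => (M * X) i j) = M *ᵥ fun i => X i j := by
    funext i
    simp only [Matrix.mul_apply, Matrix.mulVec, dotProduct]
  rw [transpose_mul_self_apply_self, transpose_mul_self_apply_self, hcol, ← mul_pow]
  exact pow_le_pow_left₀ (Real.sqrt_nonneg _) (enorm2_mulVec_le M _) 2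

lemma transpose_mul_self_sub_proj {n d k : ℕ} (U : Matrix (Fin n) (Fin d) ℝ) (hU : Uᵀ * U = 1)
    (X : Matrix (Fin n) (Fin k) ℝ) :
    (X - U * (Uᵀ * X))ᵀ * (X - U * (Uᵀ * X)) = Xᵀ * X - (Uᵀ * X)ᵀ * (Uᵀ * X) := by
  have hproj : Uᵀ * (U * (Uᵀ * X)) = Uᵀ * X := by
    rw [← Matrix.mul_assoc, hU, Matrix.one_mul]
  simp only [Matrix.transpose_sub, Matrix.transpose_mul, Matrix.transpose_transpose,
    Matrix.sub_mul, Matrix.mul_sub, Matrix.mul_assoc, hproj]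
  abel

theorem one_sub_sq_le_specNorm_sq {n d : ℕ} (U hatU : Matrix (Fin n) (Fin d) ℝ)
    (hU : Uᵀ * U = 1) (hhatU : hatUᵀ * hatU = 1) (W₁ W₂ : Matrix (Fin d) (Fin d) ℝ)
    (hW₁ : W₁ᵀ * W₁ = 1) (hW₂ : W₂ᵀ * W₂ = 1) (σv : Fin d → ℝ)
    (hSVD : Uᵀ * hatU = W₁ * Matrix.diagonal σv * W₂ᵀ) (j : Fin d) :
    1 - σv j ^ 2 ≤ specNorm (hatU * hatUᵀ - U * Uᵀ) ^ 2 := by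
  set X := hatU * W₂
  have hXX : Xᵀ * X = 1 := by
    rw [Matrix.transpose_mul, Matrix.mul_assoc, ← Matrix.mul_assoc hatUᵀ, hhatU,
      Matrix.one_mul, hW₂]
  have hUX : Uᵀ * X = W₁ * Matrix.diagonal σv := by
    rw [← Matrix.mul_assoc, hSVD, Matrix.mul_assoc _ W₂ᵀ, hW₂, Matrix.mul_one]
  have hDX : (hatU * hatUᵀ - U * Uᵀ) * X = X - U * (Uᵀ * X) := by
    rw [Matrix.sub_mul, Matrix.mul_assoc, ← Matrix.mul_assoc hatUᵀ, hhatU, Matrix.one_mul,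
      Matrix.mul_assoc]
  have hgram : (Uᵀ * X)ᵀ * (Uᵀ * X) = Matrix.diagonal fun i => σv i ^ 2 := by
    rw [hUX, Matrix.transpose_mul, Matrix.diagonal_transpose, Matrix.mul_assoc,
      ← Matrix.mul_assoc W₁ᵀ, hW₁, Matrix.one_mul, Matrix.diagonal_mul_diagonal]
    simp only [sq]
  have h := transpose_mul_self_apply_self_le (hatU * hatUᵀ - U * Uᵀ) X j
  rwa [hDX, transpose_mul_self_sub_proj U hU, hXX, hgram, Matrix.sub_apply, Matrix.one_apply_eq,
    Matrix.diagonal_apply_eq, mul_one] at h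

lemma frobNorm_eq_sqrt_trace {m n : ℕ} (A : Matrix (Fin m) (Fin n) ℝ) :
    frobNorm A = √(Aᵀ * A).trace := by
  rw [frobNorm, Matrix.trace, Finset.sum_comm]
  simp only [Matrix.diag, transpose_mul_self_apply_self, enorm2,
    Real.sq_sqrt (Finset.sum_nonneg fun _ _ => sq_nonneg _)]

lemma frobNorm_mul_mul_transpose {m k l n : ℕ} (W₁ : Matrix (Fin m) (Fin k) ℝ)
    (M : Matrix (Fin k) (Fin l) ℝ) (W₂ : Matrix (Fin n) (Fin l) ℝ)
    (hW₁ : W₁ᵀ * W₁ = 1) (hW₂ : W₂ᵀ * W₂ = 1) :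
    frobNorm (W₁ * M * W₂ᵀ) = frobNorm M := by
  have hgram : (W₁ * M * W₂ᵀ)ᵀ * (W₁ * M * W₂ᵀ) = W₂ * (Mᵀ * M) * W₂ᵀ := by
    simp only [Matrix.transpose_mul, Matrix.transpose_transpose, Matrix.mul_assoc]
    rw [← Matrix.mul_assoc W₁ᵀ, hW₁, Matrix.one_mul]
  rw [frobNorm_eq_sqrt_trace, frobNorm_eq_sqrt_trace, hgram, Matrix.trace_mul_cycle, hW₂,
    Matrix.one_mul]

lemma frobNorm_diagonal {d : ℕ} (a : Fin d → ℝ) :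
    frobNorm (Matrix.diagonal a) = √(∑ j, a j ^ 2) := by
  simp [frobNorm, Matrix.diagonal_apply, ite_pow]

lemma sqrt_sum_sq_le_sum {ι : Type*} (s : Finset ι) {f : ι → ℝ} (hf : ∀ i ∈ s, 0 ≤ f i) :
    √(∑ i ∈ s, f i ^ 2) ≤ ∑ i ∈ s, f i :=
  Real.sqrt_le_iff.mpr ⟨Finset.sum_nonneg hf, Finset.sum_sq_le_sq_sum_of_nonneg hf⟩

/-- Proposition, via Davis-Kahan: `‖UᵀhatU - W₁W₂ᵀ‖_F ≤ d ‖hatU hatUᵀ - U Uᵀ‖²`. -/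
theorem frob_bound_svd_alignment {n d : ℕ}
    (U hatU : Matrix (Fin n) (Fin d) ℝ)
    (hU : Uᵀ * U = 1) (hhatU : hatUᵀ * hatU = 1)
    (W₁ W₂ : Matrix (Fin d) (Fin d) ℝ)
    (hW₁ : W₁ᵀ * W₁ = 1) (hW₂ : W₂ᵀ * W₂ = 1)
    (σv : Fin d → ℝ) (hσv : ∀ j, σv j ∈ Set.Icc (0 : ℝ) 1)
    (hSVD : Uᵀ * hatU = W₁ * Matrix.diagonal σv * W₂ᵀ) :
    frobNorm (Uᵀ * hatU - W₁ * W₂ᵀ) ≤ d * specNorm (hatU * hatUᵀ - U * Uᵀ) ^ 2 := by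
  have hA : Uᵀ * hatU - W₁ * W₂ᵀ = W₁ * Matrix.diagonal (fun j => σv j - 1) * W₂ᵀ := by
    have hdiag : Matrix.diagonal (fun j => σv j - 1) = Matrix.diagonal σv - 1 := by
      rw [← Matrix.diagonal_one, Matrix.diagonal_sub]
    rw [hSVD, hdiag, Matrix.mul_sub, Matrix.sub_mul, Matrix.mul_one]
  rw [hA, frobNorm_mul_mul_transpose _ _ _ hW₁ hW₂, frobNorm_diagonal]
  calc √(∑ j, (σv j - 1) ^ 2) = √(∑ j, (1 - σv j) ^ 2) := by simp_rw [sub_sq_comm]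
    _ ≤ ∑ j, (1 - σv j) := sqrt_sum_sq_le_sum _ fun j _ => sub_nonneg.mpr (hσv j).2
    _ ≤ ∑ _j : Fin d, specNorm (hatU * hatUᵀ - U * Uᵀ) ^ 2 := Finset.sum_le_sum fun j _ =>
        (sub_le_sub_left (pow_le_of_le_one (hσv j).1 (hσv j).2 two_ne_zero) 1).trans
          (one_sub_sq_le_specNorm_sq U hatU hU hhatU W₁ W₂ hW₁ hW₂ σv hSVD j)
    _ = d * specNorm (hatU * hatUᵀ - U * Uᵀ) ^ 2 := by simp

end CMDSPaper
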